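/- Let (K,D,⋆) be a compact probabilistic metric space with ⋆ continuous, (f_n) a sequence of probabilistic 1-Lipschitz maps, and f a probabilistic 1-Lipschitz map such that d_L(f_n(x), f(x)) → 0 for every x ∈ K. Then (f_n) converges uniformly to f: sup_{x∈K} d_L(f_n(x), f(x)) → 0. -/

import Mathlib

open Filter Topology

noncomputable section

/-- `Δ⁺`: distribution functions `F : [-∞,∞] → [0,1]`, nondecreasing, left-continuous
on `ℝ`, with `F(-∞)=0`, `F(+∞)=1` and `F(0)=0`. -/
def IsDistFun (F : EReal → ℝ) : Prop :=
  Monotone F ∧ (∀ t, F t ∈ Set.Icc (0:ℝ) 1) ∧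
  (∀ x : ℝ, ContinuousWithinAt F (Set.Iio (x : EReal)) (x : EReal)) ∧
  F ⊥ = 0 ∧ F ⊤ = 1 ∧ F (0 : EReal) = 0

/-- The step function `H_a`. -/
def Hstep (a : ℝ) : EReal → ℝ := fun t => if t ≤ (a : EReal) then 0 else 1

/-- `H₀`. -/
def H0 : EReal → ℝ := Hstep 0

/-- `H_∞`. -/
def Hinf : EReal → ℝ := fun t => if t = ⊤ then 1 else 0

/-- The condition `A(F,G;h)` : for all `t ∈ (0,1/h)`, `G(t) ≤ F(t+h)+h`. -/
def levyCond (F G : EReal → ℝ) (h : ℝ) : Prop :=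
  ∀ t : ℝ, 0 < t → t < 1 / h → G (t : EReal) ≤ F ((t + h : ℝ) : EReal) + h

def levySet (F G : EReal → ℝ) : Set ℝ :=
  {h : ℝ | 0 < h ∧ h ≤ 1 ∧ levyCond F G h ∧ levyCond G F h}

/-- The modified Lévy distance. -/
def dL (F G : EReal → ℝ) : ℝ := sInf (levySet F G)

/-- Weak convergence: pointwise convergence at each (real) continuity point of the limit. -/
def WeakConv (F : ℕ → EReal → ℝ) (G : EReal → ℝ) : Prop :=
  ∀ t : ℝ, ContinuousAt G (t : EReal) →
    Tendsto (fun n => F n (t : EReal)) atTop (𝓝 (G (t : EReal)))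

abbrev TriOp := (EReal → ℝ) → (EReal → ℝ) → (EReal → ℝ)

/-- A triangle function on `Δ⁺`. -/
def IsTriangleFn (star : TriOp) : Prop :=
  (∀ F L, IsDistFun F → IsDistFun L → IsDistFun (star F L)) ∧
  (∀ F L, IsDistFun F → IsDistFun L → star F L = star L F) ∧
  (∀ F L K, IsDistFun F → IsDistFun L → IsDistFun K →
    star F (star L K) = star (star F L) K) ∧
  (∀ F, IsDistFun F → star F H0 = F) ∧
  (∀ F L K, IsDistFun F → IsDistFun L → IsDistFun K → F ≤ L → star F K ≤ star L K)

/-- `⋆` is continuous with respect to weak convergence. -/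
def StarContinuous (star : TriOp) : Prop :=
  ∀ (Fn Ln : ℕ → EReal → ℝ) (F L : EReal → ℝ),
    (∀ n, IsDistFun (Fn n)) → (∀ n, IsDistFun (Ln n)) →
    IsDistFun F → IsDistFun L →
    WeakConv Fn F → WeakConv Ln L →
    WeakConv (fun n => star (Fn n) (Ln n)) (star F L)

/-- `⋆` is sup-continuous. -/
def StarSupContinuous (star : TriOp) : Prop :=
  ∀ (I : Type) (_ : Nonempty I) (F : I → EReal → ℝ) (L : EReal → ℝ),
    (∀ i, IsDistFun (F i)) → IsDistFun L →
    (fun t => ⨆ i, star (F i) L t) = star (fun t => ⨆ i, F i t) L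

/-- A probabilistic metric space `(G, D, ⋆)`. -/
structure PMSpace (G : Type) where
  star : TriOp
  D : G → G → EReal → ℝ
  star_tri : IsTriangleFn star
  D_mem : ∀ p q, IsDistFun (D p q)
  D_eq_iff : ∀ p q, D p q = H0 ↔ p = q
  D_symm : ∀ p q, D p q = D q p
  D_tri : ∀ p q r, star (D p q) (D q r) ≤ D p r

/-- Probabilistic 1-Lipschitz map. -/
def PLip {G : Type} (M : PMSpace G) (f : G → EReal → ℝ) : Prop :=
  (∀ x, IsDistFun (f x)) ∧ ∀ x y, M.star (M.D x y) (f y) ≤ f x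

/-- Probabilistically continuous map. -/
def PCont {G : Type} (M : PMSpace G) (f : G → EReal → ℝ) : Prop :=
  (∀ x, IsDistFun (f x)) ∧
  ∀ (z : G) (zn : ℕ → G),
    WeakConv (fun n => M.D (zn n) z) H0 →
    WeakConv (fun n => f (zn n)) (f z)

/-- The uniform modified Lévy distance `d_∞`. -/
def dInf {G : Type} (f g : G → EReal → ℝ) : ℝ := ⨆ x, dL (f x) (g x)

/-- Probabilistic Cauchy sequence: `D(z_n,z_p)(t) → H₀(t)` for all real `t`. -/
def PCauchy {G : Type} (M : PMSpace G) (z : ℕ → G) : Prop :=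
  ∀ t : ℝ, Tendsto (fun np : ℕ × ℕ => M.D (z np.1) (z np.2) (t : EReal))
    atTop (𝓝 (H0 (t : EReal)))

def PConvTo {G : Type} (M : PMSpace G) (z : ℕ → G) (w : G) : Prop :=
  ∀ t : ℝ, Tendsto (fun n => M.D (z n) w (t : EReal)) atTop (𝓝 (H0 (t : EReal)))

def PComplete {G : Type} (M : PMSpace G) : Prop :=
  ∀ z : ℕ → G, PCauchy M z → ∃ w, PConvTo M z w

/-- Compactness: complete and every strong `t`-neighborhood cover has a finite subcover. -/
def PCompact {G : Type} (M : PMSpace G) : Prop :=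
  PComplete M ∧ ∀ t : ℝ, 0 < t → ∃ A : Finset G, ∀ x : G, ∃ a ∈ A, M.D a x (t : EReal) > 1 - t

/-!
Because `⋆` is continuous, a distribution function `F` close to `H₀` satisfies
`A(F ⋆ L, L; ε)` for a fixed `L`; approximating every `L` from below by one of finitely many
step functions makes this uniform in `L`. For a probabilistic 1-Lipschitz map `f` this says
`d_L(f x, f y) ≤ ε` as soon as `D(x, y)` is close to `H₀`, uniformly in `f`. Covering `K` by
finitely many strong neighbourhoods and using pointwise convergence at their centres, the
triangle inequality for `d_L` gives `d_L(f_n x, f x) ≤ 3ε` for all `x` and all large `n`.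
-/

namespace IsDistFun

variable {F : EReal → ℝ}

lemma nonneg (hF : IsDistFun F) (t : EReal) : 0 ≤ F t := (hF.2.1 t).1

lemma le_one (hF : IsDistFun F) (t : EReal) : F t ≤ 1 := (hF.2.1 t).2

lemma eq_zero_of_nonpos (hF : IsDistFun F) {t : EReal} (ht : t ≤ 0) : F t = 0 :=
  le_antisymm (hF.2.2.2.2.2 ▸ hF.1 ht) (hF.nonneg t)

end IsDistFun

lemma H0_of_nonpos {t : EReal} (ht : t ≤ 0) : H0 t = 0 := if_pos ht

lemma H0_of_pos {t : EReal} (ht : 0 < t) : H0 t = 1 := if_neg (not_le.2 ht)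

lemma isDistFun_H0 : IsDistFun H0 := by
  refine ⟨fun s t hst => ?_, fun t => ?_, fun x => ?_, H0_of_nonpos bot_le, H0_of_pos (by simp),
    H0_of_nonpos le_rfl⟩
  · rcases le_or_gt t 0 with ht | ht
    · rw [H0_of_nonpos ht, H0_of_nonpos (hst.trans ht)]
    · rw [H0_of_pos ht]
      rcases le_or_gt s 0 with hs | hs
      · rw [H0_of_nonpos hs]; norm_num
      · rw [H0_of_pos hs]
  · rcases le_or_gt t 0 with ht | ht
    · simp [H0_of_nonpos ht]
    · simp [H0_of_pos ht]
  · rcases le_or_gt x 0 with hx | hx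
    · have hx' : (x : EReal) ≤ 0 := by exact_mod_cast hx
      have hzero : H0 =ᶠ[𝓝[<] (x : EReal)] fun _ => 0 :=
        eventually_nhdsWithin_of_forall fun t ht => H0_of_nonpos ((le_of_lt ht).trans hx')
      rw [ContinuousWithinAt, H0_of_nonpos hx']
      exact tendsto_const_nhds.congr' hzero.symm
    · have hx' : (0 : EReal) < x := by exact_mod_cast hx
      have hone : H0 =ᶠ[𝓝 (x : EReal)] fun _ => 1 :=
        (lt_mem_nhds hx').mono fun t ht => H0_of_pos ht
      exact (continuousAt_const.congr hone.symm).continuousWithinAt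

namespace IsTriangleFn

variable {star : TriOp} {F G L : EReal → ℝ}

lemma H0_star (htri : IsTriangleFn star) (hL : IsDistFun L) : star H0 L = L :=
  (htri.2.1 H0 L isDistFun_H0 hL).trans (htri.2.2.2.1 L hL)

lemma star_mono_right (htri : IsTriangleFn star) (hF : IsDistFun F) (hG : IsDistFun G)
    (hL : IsDistFun L) (hGL : G ≤ L) :
    star F G ≤ star F L := by
  rw [htri.2.1 F G hF hG, htri.2.1 F L hF hL]
  exact htri.2.2.2.2 G L F hG hL hF hGL

end IsTriangleFn

section Levy

variable {F G H : EReal → ℝ}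

lemma levyCond.mono_left {F' : EReal → ℝ} {h : ℝ} (hFG : levyCond F G h) (hF : F ≤ F') :
    levyCond F' G h := fun t ht hth =>
  (hFG t ht hth).trans (by linarith [hF ((t + h : ℝ) : EReal)])

lemma levyCond.trans {h₁ h₂ : ℝ} (hFG : levyCond F G h₁) (hGH : levyCond G H h₂)
    (h₁_pos : 0 < h₁) (h₂_pos : 0 < h₂) (hsum : h₁ + h₂ ≤ 1) :
    levyCond F H (h₁ + h₂) := by
  intro t ht hth
  have hth' : t * (h₁ + h₂) < 1 := (lt_div_iff₀ (by positivity)).1 hth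
  have ht₂ : t < 1 / h₂ := by rw [lt_div_iff₀ h₂_pos]; nlinarith
  -- `(t + h₂) h₁ < 1` follows from `t (h₁ + h₂) < 1` if `h₁ ≤ t`,
  -- and from `h₁ (h₁ + h₂) ≤ 1` if not
  have ht₁ : t + h₂ < 1 / h₁ := by
    rw [lt_div_iff₀ h₁_pos]
    rcases le_or_gt h₁ t with h | h <;> nlinarith
  have hstep := hFG (t + h₂) (by linarith) ht₁
  rw [show t + h₂ + h₁ = t + (h₁ + h₂) by ring] at hstep
  linarith [hGH t ht ht₂]

lemma levySet_symm {h : ℝ} (hh : h ∈ levySet F G) : h ∈ levySet G F :=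
  ⟨hh.1, hh.2.1, hh.2.2.2, hh.2.2.1⟩

lemma levySet_trans {h₁ h₂ : ℝ} (hFG : h₁ ∈ levySet F G) (hGH : h₂ ∈ levySet G H)
    (hsum : h₁ + h₂ ≤ 1) : h₁ + h₂ ∈ levySet F H := by
  refine ⟨add_pos hFG.1 hGH.1, hsum, hFG.2.2.1.trans hGH.2.2.1 hFG.1 hGH.1 hsum, ?_⟩
  rw [add_comm]
  exact hGH.2.2.2.trans hFG.2.2.2 hGH.1 hFG.1 (by linarith)

lemma one_mem_levySet (hF : IsDistFun F) (hG : IsDistFun G) : (1 : ℝ) ∈ levySet F G := by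
  refine ⟨one_pos, le_rfl, ?_, ?_⟩ <;> intro t _ _ <;>
    linarith [hF.nonneg ((t + 1 : ℝ) : EReal), hG.nonneg ((t + 1 : ℝ) : EReal),
      hF.le_one (t : EReal), hG.le_one (t : EReal)]

lemma dL_nonneg : 0 ≤ dL F G :=
  Real.sInf_nonneg fun _ hh => hh.1.le

lemma dL_le_of_mem {h : ℝ} (hh : h ∈ levySet F G) : dL F G ≤ h :=
  csInf_le ⟨0, fun _ hh => hh.1.le⟩ hh

lemma dL_symm : dL F G = dL G F := by
  unfold dL
  congr 1
  ext h
  exact ⟨levySet_symm, levySet_symm⟩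

lemma dL_triangle (hF : IsDistFun F) (hG : IsDistFun G) (hH : IsDistFun H) :
    dL F H ≤ dL F G + dL G H := by
  refine le_of_forall_pos_lt_add fun ε hε => ?_
  obtain ⟨h₁, hFG, hh₁⟩ := exists_lt_of_csInf_lt ⟨1, one_mem_levySet hF hG⟩
    (lt_add_of_pos_right (dL F G) (half_pos hε))
  obtain ⟨h₂, hGH, hh₂⟩ := exists_lt_of_csInf_lt ⟨1, one_mem_levySet hG hH⟩
    (lt_add_of_pos_right (dL G H) (half_pos hε))
  rcases le_or_gt (h₁ + h₂) 1 with hsum | hsum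
  · linarith [dL_le_of_mem (levySet_trans hFG hGH hsum)]
  · linarith [dL_le_of_mem (one_mem_levySet hF hH), dL_nonneg (F := F) (G := G),
      dL_nonneg (F := G) (G := H)]

end Levy

def stepFun (c : ℝ) {m : ℕ} (a : Fin (m + 1) → ℝ) (t : EReal) : ℝ :=
  if t = ⊤ then 1 else
    Finset.univ.sup' Finset.univ_nonempty
      fun i : Fin (m + 1) => if (((i : ℕ) * c : ℝ) : EReal) < t then a i else 0

namespace stepFun

variable {c : ℝ} {m : ℕ} {a : Fin (m + 1) → ℝ}

lemma top : stepFun c a ⊤ = 1 := if_pos rfl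

lemma of_ne_top {t : EReal} (ht : t ≠ ⊤) : stepFun c a t =
    Finset.univ.sup' Finset.univ_nonempty
      fun i : Fin (m + 1) => if (((i : ℕ) * c : ℝ) : EReal) < t then a i else 0 :=
  if_neg ht

lemma level_le {t : EReal} (ht : t ≠ ⊤) {i : Fin (m + 1)}
    (hi : (((i : ℕ) * c : ℝ) : EReal) < t) :
    a i ≤ stepFun c a t := by
  rw [of_ne_top ht]
  exact Finset.le_sup'_of_le _ (Finset.mem_univ i) (if_pos hi).ge

lemma nonneg (ha : ∀ i, 0 ≤ a i) (t : EReal) : 0 ≤ stepFun c a t := by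
  by_cases ht : t = ⊤
  · simp [ht, top]
  · rw [of_ne_top ht]
    exact Finset.le_sup'_of_le _ (Finset.mem_univ 0) (by split_ifs <;> simp [ha])

lemma le_one (ha : ∀ i, a i ≤ 1) (t : EReal) : stepFun c a t ≤ 1 := by
  by_cases ht : t = ⊤
  · simp [ht, top]
  · rw [of_ne_top ht]
    exact Finset.sup'_le _ _ fun i _ => by split_ifs <;> simp [ha]

lemma monotone (ha₀ : ∀ i, 0 ≤ a i) (ha₁ : ∀ i, a i ≤ 1) : Monotone (stepFun c a) := by
  intro s t hst
  by_cases ht : t = ⊤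
  · rw [ht, top]
    exact le_one ha₁ s
  rw [of_ne_top (ne_top_of_le_ne_top ht hst), of_ne_top ht]
  refine Finset.sup'_mono_fun fun i _ => ?_
  split_ifs with hs ht'
  · exact le_rfl
  · exact absurd (hs.trans_le hst) ht'
  · exact ha₀ i
  · exact le_rfl

lemma continuousWithinAt_Iio (x : ℝ) :
    ContinuousWithinAt (stepFun c a) (Set.Iio (x : EReal)) (x : EReal) := by
  -- `stepFun c a` is constant on `(x', x]`, where `x'` is the last jump point before `x`
  set x' : ℝ := Finset.univ.sup' Finset.univ_nonempty
    fun i : Fin (m + 1) => if ((i : ℕ) * c : ℝ) < x then (i : ℕ) * c else x - 1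
  have hx' : x' < x :=
    (Finset.sup'_lt_iff _).2 fun i _ => by split_ifs with h <;> linarith
  have hconst : ∀ t ∈ Set.Ioo (x' : EReal) x, stepFun c a t = stepFun c a x := by
    intro t ht
    rw [of_ne_top (ht.2.trans (EReal.coe_lt_top x)).ne, of_ne_top (EReal.coe_ne_top x)]
    refine Finset.sup'_congr Finset.univ_nonempty rfl fun i _ => ?_
    by_cases hi : ((i : ℕ) * c : ℝ) < x
    · have hix' : ((i : ℕ) * c : ℝ) ≤ x' :=
        Finset.le_sup'_of_le _ (Finset.mem_univ i) (if_pos hi).ge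
      rw [if_pos ((EReal.coe_le_coe_iff.2 hix').trans_lt ht.1), if_pos (by exact_mod_cast hi)]
    · have hxi : (x : EReal) ≤ ((i : ℕ) * c : ℝ) := by exact_mod_cast not_lt.1 hi
      rw [if_neg (not_lt.2 (ht.2.le.trans hxi)), if_neg (not_lt.2 hxi)]
  refine tendsto_const_nhds.congr' ?_
  filter_upwards [Ioo_mem_nhdsLT_of_mem ⟨(EReal.coe_lt_coe_iff.2 hx'), le_rfl⟩] with t ht
  exact (hconst t ht).symm

lemma isDistFun (hc : 0 ≤ c) (ha₀ : ∀ i, 0 ≤ a i) (ha₁ : ∀ i, a i ≤ 1) :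
    IsDistFun (stepFun c a) := by
  have hzero : ∀ t : EReal, t ≤ 0 → stepFun c a t = 0 := by
    intro t ht
    refine le_antisymm ?_ (nonneg ha₀ t)
    rw [of_ne_top (ht.trans_lt EReal.zero_lt_top).ne]
    refine Finset.sup'_le _ _ fun i _ => ?_
    have hi : (0 : EReal) ≤ ((i : ℕ) * c : ℝ) := by exact_mod_cast (by positivity)
    rw [if_neg (not_lt.2 (ht.trans hi))]
  exact ⟨monotone ha₀ ha₁, fun t => ⟨nonneg ha₀ t, le_one ha₁ t⟩,
    continuousWithinAt_Iio, hzero ⊥ bot_le, top, hzero 0 le_rfl⟩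

lemma le_of_level_le {L : EReal → ℝ} (hL : IsDistFun L)
    (hle : ∀ i : Fin (m + 1), a i ≤ L (((i : ℕ) * c : ℝ) : EReal)) : stepFun c a ≤ L := by
  intro t
  by_cases ht : t = ⊤
  · rw [ht, top, hL.2.2.2.2.1]
  rw [of_ne_top ht]
  refine Finset.sup'_le _ _ fun i _ => ?_
  split_ifs with hi
  · exact (hle i).trans (hL.1 hi.le)
  · exact hL.nonneg t

lemma le_add_of_le_level_add {L : EReal → ℝ} (hL : Monotone L) (hc : 0 < c)
    (hle : ∀ i : Fin (m + 1), L (((i : ℕ) * c : ℝ) : EReal) ≤ a i + c)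
    {t : ℝ} (ht : 0 < t) (htm : t ≤ m * c) :
    L t ≤ stepFun c a ((t + c : ℝ) : EReal) + c := by
  set j := ⌈t / c⌉₊
  have hjm : j ≤ m := Nat.ceil_le.2 ((div_le_iff₀ hc).2 htm)
  have hjt : t ≤ j * c := (div_le_iff₀ hc).1 (Nat.le_ceil _)
  have hjt' : (j : ℝ) * c < t + c := by
    have := Nat.ceil_lt_add_one (div_nonneg ht.le hc.le)
    calc (j : ℝ) * c < (t / c + 1) * c := mul_lt_mul_of_pos_right this hc
      _ = t + c := by field_simp
  let i : Fin (m + 1) := ⟨j, Nat.lt_succ_of_le hjm⟩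
  calc L t ≤ L (((i : ℕ) * c : ℝ) : EReal) := hL (by exact_mod_cast hjt)
    _ ≤ a i + c := hle i
    _ ≤ stepFun c a ((t + c : ℝ) : EReal) + c := by
      gcongr
      exact level_le (EReal.coe_ne_top _) (by exact_mod_cast hjt')

end stepFun

lemma exists_finite_levyCond_approx {c : ℝ} (hc : 0 < c) :
    ∃ 𝒮 : Set (EReal → ℝ), 𝒮.Finite ∧ (∀ S ∈ 𝒮, IsDistFun S) ∧
      ∀ L, IsDistFun L → ∃ S ∈ 𝒮, S ≤ L ∧ levyCond S L c := by
  set m := ⌈1 / c ^ 2⌉₊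
  set k := ⌊1 / c⌋₊
  let S : (Fin (m + 1) → Fin (k + 1)) → EReal → ℝ :=
    fun v => stepFun c fun i => c * (v i : ℕ)
  refine ⟨Set.range S, Set.finite_range S, ?_, fun L hL => ?_⟩
  · rintro _ ⟨v, rfl⟩
    refine stepFun.isDistFun hc.le (fun i => by positivity) fun i => ?_
    calc c * (v i : ℕ) ≤ c * k := by gcongr; exact_mod_cast Nat.le_of_lt_succ (v i).2
      _ ≤ c * (1 / c) := by gcongr; exact Nat.floor_le (by positivity)
      _ = 1 := by field_simp
  set level : Fin (m + 1) → ℕ := fun i => ⌊L (((i : ℕ) * c : ℝ) : EReal) / c⌋₊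
  have hlevel_le : ∀ i : Fin (m + 1), c * level i ≤ L (((i : ℕ) * c : ℝ) : EReal) :=
    fun _ => (le_div_iff₀' hc).1 (Nat.floor_le (div_nonneg (hL.nonneg _) hc.le))
  have hlevel_lt : ∀ i : Fin (m + 1), L (((i : ℕ) * c : ℝ) : EReal) < c * level i + c := by
    intro i
    have := Nat.lt_floor_add_one (L (((i : ℕ) * c : ℝ) : EReal) / c)
    rw [div_lt_iff₀ hc] at this
    linarith
  have hlevel_lt_k : ∀ i : Fin (m + 1), level i < k + 1 := fun i =>
    Nat.lt_succ_of_le (Nat.floor_le_floor (div_le_div_of_nonneg_right (hL.le_one _) hc.le))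
  refine ⟨S fun i => ⟨level i, hlevel_lt_k i⟩, ⟨_, rfl⟩,
    stepFun.le_of_level_le hL hlevel_le, fun t ht htc =>
      stepFun.le_add_of_le_level_add hL.1 hc (fun i => (hlevel_lt i).le) ht ?_⟩
  calc t ≤ 1 / c := htc.le
    _ = 1 / c ^ 2 * c := by field_simp
    _ ≤ m * c := by gcongr; exact Nat.le_ceil _

lemma exists_continuousAt_mem_Ioo {L : EReal → ℝ} (hL : Monotone L) {a b : ℝ} (hab : a < b) :
    ∃ u ∈ Set.Ioo a b, ContinuousAt L (u : EReal) := by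
  have hcount : {u : ℝ | ¬ContinuousAt L (u : EReal)}.Countable :=
    hL.countable_not_continuousAt.preimage EReal.coe_injective
  obtain ⟨u, hu, hu_mem⟩ :=
    (hcount.dense_compl ℝ).exists_mem_open isOpen_Ioo (Set.nonempty_Ioo.2 hab)
  exact ⟨u, hu_mem, not_not.1 hu⟩

lemma weakConv_H0 {F : ℕ → EReal → ℝ} (hF : ∀ n, IsDistFun (F n)) {δ : ℕ → ℝ}
    (hδ : Tendsto δ atTop (𝓝 0)) (hFδ : ∀ n, 1 - δ n < F n (δ n)) : WeakConv F H0 := by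
  intro s _
  rcases le_or_gt s 0 with hs | hs
  · have hs' : (s : EReal) ≤ 0 := by exact_mod_cast hs
    simp only [H0_of_nonpos hs', (hF _).eq_zero_of_nonpos hs', tendsto_const_nhds]
  · rw [H0_of_pos (by exact_mod_cast hs)]
    have hlow : Tendsto (fun n => 1 - δ n) atTop (𝓝 1) := by
      simpa using tendsto_const_nhds.sub hδ
    refine tendsto_of_tendsto_of_tendsto_of_le_of_le' hlow tendsto_const_nhds ?_
      (Eventually.of_forall fun n => (hF n).le_one _)
    filter_upwards [hδ.eventually (eventually_le_nhds hs)] with n hn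
    exact (hFδ n).le.trans ((hF n).1 (by exact_mod_cast hn))

lemma weakConv_star_of_weakConv_H0 {star : TriOp} (htri : IsTriangleFn star)
    (hsc : StarContinuous star) {F : ℕ → EReal → ℝ} (hF : ∀ n, IsDistFun (F n))
    {L : EReal → ℝ} (hL : IsDistFun L) (hFH0 : WeakConv F H0) :
    WeakConv (fun n => star (F n) L) L := by
  simpa only [htri.H0_star hL] using hsc F (fun _ => L) H0 L hF (fun _ => hL) isDistFun_H0 hL hFH0
    fun _ _ => tendsto_const_nhds

theorem eventually_levyCond_star {star : TriOp} (htri : IsTriangleFn star)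
    (hsc : StarContinuous star) {L : EReal → ℝ} (hL : IsDistFun L) {ε : ℝ} (hε : 0 < ε) :
    ∀ᶠ δ : ℝ in 𝓝[>] 0, ∀ F : EReal → ℝ, IsDistFun F → 1 - δ < F δ →
      levyCond (star F L) L ε := by
  by_contra hcon
  rw [not_eventually, frequently_iff_seq_forall] at hcon
  obtain ⟨δ, hδ, hbad⟩ := hcon
  simp only [levyCond, not_forall, not_le, exists_prop] at hbad
  choose F hF hFδ t ht₀ ht₁ hlt using hbad
  have hwc := weakConv_star_of_weakConv_H0 htri hsc hF hL
    (weakConv_H0 hF (tendsto_nhds_of_tendsto_nhdsWithin hδ) hFδ)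
  obtain ⟨t₀, -, φ, hφ, htφ⟩ :=
    isCompact_Icc.tendsto_subseq (s := Set.Icc 0 (1 / ε)) fun n => ⟨(ht₀ n).le, (ht₁ n).le⟩
  obtain ⟨u, hu, hLu⟩ := exists_continuousAt_mem_Ioo hL.1 (lt_add_of_pos_right t₀ hε)
  -- eventually `t (φ n) < u < t (φ n) + ε`, so `L u ≥ L (t (φ n)) > (F (φ n) ⋆ L) u + ε`,
  -- contradicting weak convergence `F (φ n) ⋆ L → L` at the continuity point `u`
  have hgap : ∀ᶠ n in atTop, star (F (φ n)) L u ≤ L u - ε := by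
    filter_upwards [htφ.eventually (eventually_lt_nhds hu.1),
      htφ.eventually (eventually_gt_nhds (by linarith [hu.2] : u - ε < t₀))] with n h₁ h₂
    simp only [Function.comp_apply] at h₁ h₂
    have hmono : star (F (φ n)) L u ≤ star (F (φ n)) L ((t (φ n) + ε : ℝ) : EReal) :=
      (htri.1 _ _ (hF _) hL).1 (by exact_mod_cast (by linarith : u ≤ t (φ n) + ε))
    linarith [hlt (φ n), hL.1 (by exact_mod_cast h₁.le : ((t (φ n) : ℝ) : EReal) ≤ u)]
  linarith [le_of_tendsto ((hwc u hLu).comp hφ.tendsto_atTop) hgap]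

theorem eventually_forall_levyCond_star {star : TriOp} (htri : IsTriangleFn star)
    (hsc : StarContinuous star) {ε : ℝ} (hε₀ : 0 < ε) (hε₁ : ε ≤ 1) :
    ∀ᶠ δ : ℝ in 𝓝[>] 0, ∀ F : EReal → ℝ, IsDistFun F → 1 - δ < F δ →
      ∀ L, IsDistFun L → levyCond (star F L) L ε := by
  obtain ⟨𝒮, h𝒮, h𝒮_dist, happrox⟩ := exists_finite_levyCond_approx (half_pos hε₀)
  filter_upwards [(eventually_all_finite h𝒮).2 fun S hS =>
      eventually_levyCond_star htri hsc (h𝒮_dist S hS) (half_pos hε₀)]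
    with δ hδ F hF hFδ L hL
  obtain ⟨S, hS, hSL, hLS⟩ := happrox L hL
  have hFSL := (hδ S hS F hF hFδ).trans hLS (half_pos hε₀) (half_pos hε₀) (by linarith)
  rw [add_halves] at hFSL
  exact hFSL.mono_left (htri.star_mono_right hF (h𝒮_dist S hS) hL hSL)

lemma PLip.dL_le {G : Type} {M : PMSpace G} {f : G → EReal → ℝ} (hf : PLip M f) {η δ : ℝ}
    (hη₀ : 0 < η) (hη₁ : η ≤ 1)
    (hδ : ∀ F : EReal → ℝ, IsDistFun F → 1 - δ < F δ →
      ∀ L, IsDistFun L → levyCond (M.star F L) L η)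
    {x y : G} (hxy : 1 - δ < M.D x y δ) : dL (f x) (f y) ≤ η := by
  have hyx : 1 - δ < M.D y x δ := M.D_symm x y ▸ hxy
  exact dL_le_of_mem ⟨hη₀, hη₁, (hδ _ (M.D_mem x y) hxy _ (hf.1 y)).mono_left (hf.2 x y),
    (hδ _ (M.D_mem y x) hyx _ (hf.1 x)).mono_left (hf.2 y x)⟩

/-- On a compact probabilistic metric space, pointwise convergence of probabilistic
1-Lipschitz maps to a 1-Lipschitz map implies uniform convergence. -/
theorem stmt16 {K : Type} (M : PMSpace K) (hc : StarContinuous M.star)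
    (hcomp : PCompact M) (f : ℕ → K → EReal → ℝ) (hf : ∀ n, PLip M (f n))
    (g : K → EReal → ℝ) (hg : PLip M g)
    (hpt : ∀ x, Tendsto (fun n => dL (f n x) (g x)) atTop (𝓝 0)) :
    Tendsto (fun n => dInf (f n) g) atTop (𝓝 0) := by
  refine tendsto_order.2 ⟨fun a ha => Eventually.of_forall fun n =>
    ha.trans_le (Real.iSup_nonneg fun _ => dL_nonneg), fun a ha => ?_⟩
  set η := min (a / 4) 1
  have hη₀ : 0 < η := lt_min (by positivity) one_pos
  obtain ⟨δ, hδ, hδ₀⟩ := ((eventually_forall_levyCond_star M.star_tri hc hη₀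
    (min_le_right _ _)).and self_mem_nhdsWithin).exists
  obtain ⟨A, hA⟩ := hcomp.2 δ hδ₀
  filter_upwards [(eventually_all_finset A).2 fun y _ =>
    (hpt y).eventually (eventually_lt_nhds hη₀)] with n hn
  refine (Real.iSup_le (fun x => ?_) (by positivity : 0 ≤ 3 * η)).trans_lt
    (by linarith [min_le_left (a / 4) 1])
  obtain ⟨y, hyA, hyx⟩ := hA x
  calc dL (f n x) (g x) ≤ dL (f n y) (f n x) + (dL (f n y) (g y) + dL (g y) (g x)) := by
        rw [dL_symm (F := f n y)]
        exact (dL_triangle ((hf n).1 x) ((hf n).1 y) (hg.1 x)).trans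
          (add_le_add_right (dL_triangle ((hf n).1 y) (hg.1 y) (hg.1 x)) _)
    _ ≤ η + (η + η) := by
        gcongr
        exacts [(hf n).dL_le hη₀ (min_le_right _ _) hδ hyx, (hn y hyA).le,
          hg.dL_le hη₀ (min_le_right _ _) hδ hyx]
    _ = 3 * η := by ring
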